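/- arXiv:2009.12256 — 2 statements merged into one kernel-verified Lean document; each statement's English description precedes it below -/
import Mathlib

section
/- Let T ≥ 1 and let X₀, X₁, …, X_T and Ξ₁, …, Ξ_T be nonempty finite types, and let f : X₀ × (Ξ₁ × X₁) × ⋯ × (Ξ_T × X_T) → ℝ be a payoff function. Define the alternating game value by backward recursion on partial histories: the value of a complete play is f evaluated at that play; the value of a history about to make an existential move from X_t is the minimum over X_t of the values of the extended histories; the value of a history about to make a universal move from Ξ_t is the maximum over Ξ_t of the values of the extended histories. Then the value of the empty history equals the minimum, over all nonanticipative policies consisting of x₀ ∈ X₀ together with functions σ_t : Ξ₁ × ⋯ × Ξ_t → X_t for t = 1, …, T, of the maximum over all adversary sequences (ξ₁, …, ξ_T) ∈ Ξ₁ × ⋯ × Ξ_T of f(x₀, ξ₁, σ₁(ξ₁), ξ₂, σ₂(ξ₁, ξ₂), …, ξ_T, σ_T(ξ₁, …, ξ_T)). -/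
/-!
By induction on the number of stages. After the first moves `(ξ₀, x₀)` the remaining game is
again of the same shape, so by induction its value is a minimum over residual policies `σ'`.
Merging the minima over `x₀` and `σ'`, the value becomes `max_{ξ₀} min_{(x₀, σ')}`, and on finite
sets a max of mins equals the min over choice functions `ξ₀ ↦ (x₀, σ')` (pick a minimiser for each
`ξ₀`). Such choice functions are exactly the policies of the whole game split at the first stage.
-/

/-- The value of an alternating game in which, for each stage `t = 0, …, T-1`
(representing stages `1, …, T`), first the adversary picks `ξ_t : Ξ t` and then
the decision maker picks `x_t : X t`, with payoff `f` evaluated at the complete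
play.  It is defined by recursion on the number of stages, which unfolds exactly
the backward-recursion (nested `max`/`min`) value of the game tree:
`advVal T Ξ X f = ⨆ ξ_0, ⨅ x_0, ⨆ ξ_1, ⨅ x_1, … f`.  For finite nonempty move
sets all these infima and suprema over `ℝ` are attained, i.e. they are the
minima/maxima of the backward recursion. -/
noncomputable def advVal : (T : ℕ) → (Ξ : Fin T → Type) → (X : Fin T → Type) →
    ((∀ t : Fin T, Ξ t × X t) → ℝ) → ℝ
  | 0, _, _, f => f finZeroElim
  | T + 1, Ξ, X, f =>
      ⨆ ξ : Ξ 0, ⨅ x : X 0,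
        advVal T (fun t => Ξ t.succ) (fun t => X t.succ)
          (fun g => f (fun t => Fin.cases (motive := fun t => Ξ t × X t) (ξ, x) g t))

theorem Finite.ciSup_ciInf_eq {α ι : Type*} {κ : ι → Type*} [ConditionallyCompleteLinearOrder α]
    [Finite ι] [∀ i, Finite (κ i)] [∀ i, Nonempty (κ i)] (f : ∀ i, κ i → α) :
    ⨆ i, ⨅ j, f i j = ⨅ g : ∀ i, κ i, ⨆ i, f i (g i) := by
  refine le_antisymm (le_ciInf fun g => Finite.ciSup_mono fun i => Finite.ciInf_le _ (g i)) ?_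
  choose g hg using fun i => exists_eq_ciInf_of_finite (f := f i)
  calc ⨅ g : ∀ i, κ i, ⨆ i, f i (g i) ≤ ⨆ i, f i (g i) := Finite.ciInf_le _ g
    _ = ⨆ i, ⨅ j, f i j := by simp only [hg]

theorem Fin.ciSup_pi_eq_ciSup_cons {α : Type*} [ConditionallyCompleteLattice α] {n : ℕ}
    {β : Fin (n + 1) → Type*} [∀ i, Finite (β i)] (F : (∀ i, β i) → α) :
    ⨆ x, F x = ⨆ (x₀ : β 0) (x' : ∀ i : Fin n, β i.succ), F (Fin.cons x₀ x') := by
  rw [← (Fin.consEquiv β).iSup_comp, Finite.ciSup_prod]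
  rfl

abbrev Policy {T : ℕ} (Ξ X : Fin T → Type) : Type :=
  ∀ t : Fin T, (∀ s : Fin T, s ≤ t → Ξ s) → X t

namespace Policy

def play {T : ℕ} {Ξ X : Fin T → Type} (σ : Policy Ξ X) (ξ : ∀ t, Ξ t) : ∀ t, Ξ t × X t :=
  fun t => (ξ t, σ t fun s _ => ξ s)

variable {T : ℕ} {Ξ X : Fin (T + 1) → Type}

def uncons (σ : Policy Ξ X) (ξ₀ : Ξ 0) :
    X 0 × Policy (fun t => Ξ t.succ) (fun t => X t.succ) :=
  (σ 0 (Fin.cons (α := fun s => s ≤ 0 → Ξ s) (fun _ => ξ₀)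
      fun s hs => absurd hs (Fin.succ_pos s).not_ge),
    fun t h => σ t.succ (Fin.cons (α := fun s => s ≤ t.succ → Ξ s) (fun _ => ξ₀)
      fun s hs => h s (Fin.succ_le_succ_iff.mp hs)))

theorem uncons_surjective : Function.Surjective (uncons (Ξ := Ξ) (X := X)) := fun p =>
  ⟨Fin.cases (motive := fun t => (∀ s, s ≤ t → Ξ s) → X t) (fun h => (p (h 0 le_rfl)).1)
    fun t h => (p (h 0 (Fin.zero_le _))).2 t fun s hs => h s.succ (Fin.succ_le_succ_iff.mpr hs),
    rfl⟩

theorem play_cons (σ : Policy Ξ X) (ξ₀ : Ξ 0) (ξ' : ∀ t : Fin T, Ξ t.succ) :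
    σ.play (Fin.cons ξ₀ ξ') =
      Fin.cons (α := fun t => Ξ t × X t) (ξ₀, (σ.uncons ξ₀).1) ((σ.uncons ξ₀).2.play ξ') := by
  funext t
  cases t using Fin.cases with
  | zero =>
    refine Prod.ext rfl (congrArg (σ 0) (funext fun s => funext fun hs => ?_))
    cases s using Fin.cases with
    | zero => rfl
    | succ s => exact absurd hs (Fin.succ_pos s).not_ge
  | succ t =>
    refine Prod.ext rfl (congrArg (σ t.succ) (funext fun s => funext fun hs => ?_))
    cases s using Fin.cases <;> rfl

end Policy

theorem advVal_eq_iInf_iSup_play : ∀ {T : ℕ} (Ξ X : Fin T → Type)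
    [∀ t, Finite (Ξ t)] [∀ t, Finite (X t)] [∀ t, Nonempty (X t)]
    (g : (∀ t, Ξ t × X t) → ℝ), advVal T Ξ X g = ⨅ σ : Policy Ξ X, ⨆ ξ, g (σ.play ξ)
  | 0, Ξ, X, _, _, _, g => by
    rw [ciInf_unique, ciSup_unique]
    exact congrArg g (funext fun t => t.elim0)
  | T + 1, Ξ, X, _, _, _, g => by
    calc advVal (T + 1) Ξ X g
        = ⨆ ξ₀ : Ξ 0, ⨅ x₀ : X 0, ⨅ σ' : Policy (fun t => Ξ t.succ) (fun t => X t.succ),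
            ⨆ ξ', g (Fin.cons (ξ₀, x₀) (σ'.play ξ')) := by
          simp only [advVal, advVal_eq_iInf_iSup_play]; rfl
      _ = ⨆ ξ₀ : Ξ 0, ⨅ p : X 0 × Policy (fun t => Ξ t.succ) (fun t => X t.succ),
            ⨆ ξ', g (Fin.cons (ξ₀, p.1) (p.2.play ξ')) := by
          simp only [Finite.ciInf_prod]
      _ = ⨅ s : Ξ 0 → X 0 × Policy (fun t => Ξ t.succ) (fun t => X t.succ),
            ⨆ ξ₀, ⨆ ξ', g (Fin.cons (ξ₀, (s ξ₀).1) ((s ξ₀).2.play ξ')) :=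
          Finite.ciSup_ciInf_eq _
      _ = ⨅ σ : Policy Ξ X, ⨆ ξ₀, ⨆ ξ', g (σ.play (Fin.cons ξ₀ ξ')) := by
          simp only [Policy.play_cons]
          exact (Policy.uncons_surjective.iInf_comp _).symm
      _ = ⨅ σ : Policy Ξ X, ⨆ ξ, g (σ.play ξ) := by
          simp only [Fin.ciSup_pi_eq_ciSup_cons]

theorem multistage_game_value_eq_min_over_policies_general
    (T : ℕ) (X0 : Type) (X : Fin T → Type) (Ξ : Fin T → Type)
    [∀ t, Fintype (X t)] [∀ t, Nonempty (X t)]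
    [∀ t, Fintype (Ξ t)]
    (f : X0 → (∀ t : Fin T, Ξ t × X t) → ℝ) :
    (⨅ x₀ : X0, advVal T Ξ X (f x₀)) =
      ⨅ x₀ : X0, ⨅ σ : ∀ t : Fin T, ((∀ s : Fin T, s ≤ t → Ξ s) → X t),
        ⨆ ξ : ∀ t : Fin T, Ξ t,
          f x₀ (fun t => (ξ t, σ t fun s _ => ξ s)) :=
  iInf_congr fun x₀ => advVal_eq_iInf_iSup_play Ξ X (f x₀)

/-- The alternating (nested min-max-min-…) value of a multistage robust problem,
in which the decision maker first picks `x₀ : X0` and then, for `T ≥ 1` stages,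
the adversary reveals `ξ_t : Ξ t` before the decision maker picks `x_t : X t`,
equals the value of its deterministic equivalent: the minimum over all
nonanticipative policies — an initial decision `x₀` together with, for each
stage `t`, a map `σ t` from the adversary moves revealed so far (those of
stages `s ≤ t`) to a decision in `X t` — of the maximum over all adversary
sequences `ξ` of the payoff of the resulting play. -/
theorem multistage_game_value_eq_min_over_policies
    (T : ℕ) (hT : 1 ≤ T) (X0 : Type) (X : Fin T → Type) (Ξ : Fin T → Type)
    [Fintype X0] [Nonempty X0]
    [∀ t, Fintype (X t)] [∀ t, Nonempty (X t)]
    [∀ t, Fintype (Ξ t)] [∀ t, Nonempty (Ξ t)]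
    (f : X0 → (∀ t : Fin T, Ξ t × X t) → ℝ) :
    (⨅ x₀ : X0, advVal T Ξ X (f x₀)) =
      ⨅ x₀ : X0, ⨅ σ : ∀ t : Fin T, ((∀ s : Fin T, s ≤ t → Ξ s) → X t),
        ⨆ ξ : ∀ t : Fin T, Ξ t,
          f x₀ (fun t => (ξ t, σ t fun s _ => ξ s)) :=
  multistage_game_value_eq_min_over_policies_general T X0 X Ξ f
end

section
/- Let T ≥ 1 and let X₀, X₁, …, X_T and Ξ₁, …, Ξ_T be nonempty finite types, and let f : X₀ × (Ξ₁ × X₁) × ⋯ × (Ξ_T × X_T) → EReal be a payoff function with values in the extended reals (the value +∞ encoding plays that violate the existential constraint system). Define the alternating game value by backward recursion on partial histories: the value of a complete play is f evaluated at that play; the value of a history about to make an existential move from X_t is the infimum over X_t of the values of the extended histories; the value of a history about to make a universal move from Ξ_t is the supremum over Ξ_t of the values of the extended histories. Then the value of the empty history equals the infimum, over all nonanticipative policies consisting of x₀ ∈ X₀ together with functions σ_t : Ξ₁ × ⋯ × Ξ_t → X_t for t = 1, …, T, of the supremum over all adversary sequences (ξ₁, …, ξ_T) ∈ Ξ₁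 × ⋯ × Ξ_T of f(x₀, ξ₁, σ₁(ξ₁), …, ξ_T, σ_T(ξ₁, …, ξ_T)). -/
/-- The value (in the extended reals) of an alternating game in which, for each
stage `t = 0, …, T-1` (representing stages `1, …, T`), first the adversary picks
`ξ_t : Ξ t` and then the decision maker picks `x_t : X t`, with payoff `f`
evaluated at the complete play (`+∞` encoding plays violating the existential
constraint system).  It is defined by recursion on the number of stages, which
unfolds exactly the backward-recursion (nested `sup`/`inf`) value of the game
tree: `advValE T Ξ X f = ⨆ ξ_0, ⨅ x_0, ⨆ ξ_1, ⨅ x_1, … f`. -/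
noncomputable def advValE : (T : ℕ) → (Ξ : Fin T → Type) → (X : Fin T → Type) →
    ((∀ t : Fin T, Ξ t × X t) → EReal) → EReal
  | 0, _, _, f => f finZeroElim
  | T + 1, Ξ, X, f =>
      ⨆ ξ : Ξ 0, ⨅ x : X 0,
        advValE T (fun t => Ξ t.succ) (fun t => X t.succ)
          (fun g => f (fun t => Fin.cases (motive := fun t => Ξ t × X t) (ξ, x) g t))

/-!
Backward induction on the number of stages. After the first adversary move `ξ₀` and the first
decision, the remaining game is again of the same shape, so by induction its value is an infimum
over policies of the remaining stages. Complete distributivity of `EReal` turns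
`⨆ ξ₀, ⨅ (x, τ), _` into `⨅ c, ⨆ ξ₀, _` over choice functions `c : ξ₀ ↦ (x, τ)`, and such choice
functions are exactly the nonanticipative policies of the whole game.
-/

theorem Fin.iSup_pi_succ {α : Type*} [CompleteLattice α] {n : ℕ} {β : Fin (n + 1) → Type*}
    (F : (∀ t, β t) → α) :
    ⨆ b, F b = ⨆ (b₀ : β 0) (b : ∀ t : Fin n, β t.succ), F (Fin.cons b₀ b) := by
  rw [← (Fin.consEquiv β).iSup_comp, iSup_prod]
  rfl

namespace MultistageGame

def Policy (T : ℕ) (Ξ X : Fin T → Type) : Type :=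
  ∀ t : Fin T, (∀ s : Fin T, s ≤ t → Ξ s) → X t

def Policy.play {T : ℕ} {Ξ X : Fin T → Type} (σ : Policy T Ξ X) (ξ : ∀ t, Ξ t) :
    ∀ t, Ξ t × X t :=
  fun t => (ξ t, σ t fun s _ => ξ s)

namespace Policy

variable {T : ℕ} {Ξ X : Fin (T + 1) → Type}

def consHistory {t : Fin (T + 1)} (ξ₀ : Ξ 0) (h : ∀ s : Fin T, s.succ ≤ t → Ξ s.succ) :
    ∀ s : Fin (T + 1), s ≤ t → Ξ s :=
  fun s => Fin.cases (motive := fun s => s ≤ t → Ξ s) (fun _ => ξ₀) h s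

def cons (c : Ξ 0 → X 0 × Policy T (fun t => Ξ t.succ) (fun t => X t.succ)) :
    Policy (T + 1) Ξ X :=
  Fin.cases (motive := fun t => (∀ s, s ≤ t → Ξ s) → X t)
    (fun h => (c (h 0 le_rfl)).1)
    (fun t h => (c (h 0 (Fin.zero_le _))).2 t fun s hs => h s.succ (Fin.succ_le_succ_iff.mpr hs))

def split (σ : Policy (T + 1) Ξ X) (ξ₀ : Ξ 0) :
    X 0 × Policy T (fun t => Ξ t.succ) (fun t => X t.succ) :=
  (σ 0 (consHistory ξ₀ fun s hs => (Fin.succ_ne_zero s (Fin.le_zero_iff.mp hs)).elim),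
    fun t h => σ t.succ (consHistory ξ₀ fun s hs => h s (Fin.succ_le_succ_iff.mp hs)))

theorem consHistory_eq {t : Fin (T + 1)} (h : ∀ s : Fin (T + 1), s ≤ t → Ξ s)
    (h' : ∀ s : Fin T, s.succ ≤ t → Ξ s.succ) (hh' : ∀ s hs, h' s hs = h s.succ hs) :
    consHistory (h 0 (Fin.zero_le t)) h' = h := by
  funext s
  induction s using Fin.cases
  case zero => rfl
  case succ s => exact funext (hh' s)

theorem cons_split (σ : Policy (T + 1) Ξ X) : cons σ.split = σ := by
  funext t h
  induction t using Fin.cases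
  case zero =>
    exact congrArg (σ 0)
      (consHistory_eq h _ fun s hs => (Fin.succ_ne_zero s (Fin.le_zero_iff.mp hs)).elim)
  case succ t => exact congrArg (σ t.succ) (consHistory_eq h _ fun _ _ => rfl)

theorem cons_surjective :
    Function.Surjective
      (cons : (Ξ 0 → X 0 × Policy T (fun t => Ξ t.succ) (fun t => X t.succ)) → _) :=
  fun σ => ⟨σ.split, cons_split σ⟩

theorem play_cons (c : Ξ 0 → X 0 × Policy T (fun t => Ξ t.succ) (fun t => X t.succ))
    (ξ₀ : Ξ 0) (ξ : ∀ t : Fin T, Ξ t.succ) :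
    (cons c).play (Fin.cons ξ₀ ξ) = Fin.cons (ξ₀, (c ξ₀).1) ((c ξ₀).2.play ξ) := by
  funext t
  induction t using Fin.cases <;> rfl

end Policy

theorem advValE_zero (Ξ X : Fin 0 → Type) (g : (∀ t : Fin 0, Ξ t × X t) → EReal) :
    advValE 0 Ξ X g = ⨅ σ : Policy 0 Ξ X, ⨆ ξ : ∀ t, Ξ t, g (σ.play ξ) := by
  have hplay (σ : Policy 0 Ξ X) (ξ : ∀ t, Ξ t) : σ.play ξ = finZeroElim :=
    funext fun t => t.elim0
  have : Nonempty (Policy 0 Ξ X) := ⟨fun t => t.elim0⟩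
  simp only [hplay, iSup_const, iInf_const]
  rfl

theorem advValE_eq_iInf_iSup_play :
    ∀ (T : ℕ) (Ξ X : Fin T → Type) (g : (∀ t, Ξ t × X t) → EReal),
      advValE T Ξ X g = ⨅ σ : Policy T Ξ X, ⨆ ξ : ∀ t, Ξ t, g (σ.play ξ)
  | 0, Ξ, X, g => advValE_zero Ξ X g
  | T + 1, Ξ, X, g => by
    calc advValE (T + 1) Ξ X g
        = ⨆ ξ₀ : Ξ 0, ⨅ x : X 0, advValE T (fun t => Ξ t.succ) (fun t => X t.succ)
            (fun p => g (Fin.cons (ξ₀, x) p)) := rfl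
      _ = ⨆ ξ₀ : Ξ 0, ⨅ p : X 0 × Policy T (fun t => Ξ t.succ) (fun t => X t.succ),
            ⨆ ξ, g (Fin.cons (ξ₀, p.1) (p.2.play ξ)) := by
        simp only [advValE_eq_iInf_iSup_play T, iInf_prod]
      _ = ⨅ c : Ξ 0 → X 0 × Policy T (fun t => Ξ t.succ) (fun t => X t.succ),
            ⨆ (ξ₀ : Ξ 0) (ξ : ∀ t : Fin T, Ξ t.succ),
              g ((Policy.cons c).play (Fin.cons ξ₀ ξ)) := by
        simp only [iSup_iInf_eq, Policy.play_cons]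
      _ = ⨅ c : Ξ 0 → X 0 × Policy T (fun t => Ξ t.succ) (fun t => X t.succ),
            ⨆ ξ : ∀ t, Ξ t, g ((Policy.cons c).play ξ) :=
        iInf_congr fun c => (Fin.iSup_pi_succ fun ξ => g ((Policy.cons c).play ξ)).symm
      _ = ⨅ σ : Policy (T + 1) Ξ X, ⨆ ξ : ∀ t, Ξ t, g (σ.play ξ) :=
        Policy.cons_surjective.iInf_comp fun σ => ⨆ ξ, g (σ.play ξ)

end MultistageGame

theorem multistage_game_value_eq_inf_over_policies_EReal_general
    (T : ℕ) (X0 : Type) (X : Fin T → Type) (Ξ : Fin T → Type)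
    (f : X0 → (∀ t : Fin T, Ξ t × X t) → EReal) :
    (⨅ x₀ : X0, advValE T Ξ X (f x₀)) =
      ⨅ x₀ : X0, ⨅ σ : ∀ t : Fin T, ((∀ s : Fin T, s ≤ t → Ξ s) → X t),
        ⨆ ξ : ∀ t : Fin T, Ξ t,
          f x₀ (fun t => (ξ t, σ t fun s _ => ξ s)) :=
  iInf_congr fun x₀ => MultistageGame.advValE_eq_iInf_iSup_play T Ξ X (f x₀)

/-- The alternating (nested inf-sup-inf-…) value of a multistage robust problem
with extended-real payoff (`+∞` encoding violation of the existential
constraints), in which the decision maker first picks `x₀ : X0` and then, for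
`T ≥ 1` stages, the adversary reveals `ξ_t : Ξ t` before the decision maker
picks `x_t : X t`, equals the value of its deterministic equivalent: the
infimum over all nonanticipative policies — an initial decision `x₀` together
with, for each stage `t`, a map `σ t` from the adversary moves revealed so far
(those of stages `s ≤ t`) to a decision in `X t` — of the supremum over all
adversary sequences `ξ` of the payoff of the resulting play. -/
theorem multistage_game_value_eq_inf_over_policies_EReal
    (T : ℕ) (hT : 1 ≤ T) (X0 : Type) (X : Fin T → Type) (Ξ : Fin T → Type)
    [Fintype X0] [Nonempty X0]
    [∀ t, Fintype (X t)] [∀ t, Nonempty (X t)]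
    [∀ t, Fintype (Ξ t)] [∀ t, Nonempty (Ξ t)]
    (f : X0 → (∀ t : Fin T, Ξ t × X t) → EReal) :
    (⨅ x₀ : X0, advValE T Ξ X (f x₀)) =
      ⨅ x₀ : X0, ⨅ σ : ∀ t : Fin T, ((∀ s : Fin T, s ≤ t → Ξ s) → X t),
        ⨆ ξ : ∀ t : Fin T, Ξ t,
          f x₀ (fun t => (ξ t, σ t fun s _ => ξ s)) :=
  multistage_game_value_eq_inf_over_policies_EReal_general T X0 X Ξ f
end
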